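/- arXiv:math/9301206 — 2 statements merged into one kernel-verified Lean document; each statement's English description precedes it below -/
import Mathlib

section
/- Let F be a free filter on ℕ. For an infinite set X ⊆ ℕ let f_X : ℕ → ℕ be the increasing enumeration of X. Then F, identified with a subset of Cantor space 2^ω, has the Baire property if and only if the family F* = {f_X : X ∈ F} is bounded under eventual domination, i.e., there exists g : ℕ → ℕ such that for every X ∈ F, f_X(n) ≤ g(n) for all but finitely many n. -/
open MeasureTheory

/-- `F` is a filter of subsets of `ℕ`: it contains `ℕ`, is closed under finite (binary)
intersections and under supersets. -/
def IsSetFilter (F : Set (Set ℕ)) : Prop :=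
  Set.univ ∈ F ∧ (∀ X ∈ F, ∀ Y ∈ F, X ∩ Y ∈ F) ∧ (∀ X ∈ F, ∀ Y : Set ℕ, X ⊆ Y → Y ∈ F)

/-- A free filter: a proper filter containing every cofinite subset of `ℕ`
(so every member of `F` is infinite). -/
def IsFreeFilter (F : Set (Set ℕ)) : Prop :=
  IsSetFilter F ∧ ∅ ∉ F ∧ ∀ X : Set ℕ, Xᶜ.Finite → X ∈ F

open scoped Classical in
/-- The characteristic function of `X ⊆ ℕ`, as a point of Cantor space `2^ω = ℕ → Bool`. -/
noncomputable def chi (X : Set ℕ) : ℕ → Bool := fun n => if n ∈ X then true else false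

/-- `μ` is the canonical product probability measure on Cantor space (the infinite product
of uniform measures on `{0,1}`, i.e. Haar measure): every cylinder determined by values on
a finite set `s` has measure `(1/2)^|s|`. -/
def IsCantorMeasure (μ : Measure (ℕ → Bool)) : Prop :=
  ∀ (s : Finset ℕ) (f : ℕ → Bool),
    μ {x : ℕ → Bool | ∀ i ∈ s, x i = f i} = (1 / 2 : ENNReal) ^ s.card



/-- For an infinite `X ⊆ ℕ`, `Nat.nth (· ∈ X)` is the increasing enumeration `f_X` of `X`. -/
noncomputable def enum (X : Set ℕ) : ℕ → ℕ := Nat.nth (· ∈ X)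



open Topology Set

lemma chi_eq_true {X : Set ℕ} {n : ℕ} : chi X n = true ↔ n ∈ X := by
  simp [chi]

lemma chi_eq_false {X : Set ℕ} {n : ℕ} : chi X n = false ↔ n ∉ X := by
  simp [chi]

lemma chi_injective : Function.Injective chi := by
  intro X Y h
  ext n
  constructor
  · intro hn; exact chi_eq_true.mp (h ▸ chi_eq_true.mpr hn)
  · intro hn; exact chi_eq_true.mp (h.symm ▸ chi_eq_true.mpr hn)

/-- cylinder sets are open -/
lemma isOpen_cyl (s : Finset ℕ) (σ : ℕ → Bool) : IsOpen {y : ℕ → Bool | ∀ i ∈ s, y i = σ i} := by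
  have : {y : ℕ → Bool | ∀ i ∈ s, y i = σ i} = ⋂ i ∈ s, {y : ℕ → Bool | y i = σ i} := by
    ext y; simp
  rw [this]
  refine isOpen_biInter_finset fun i _ => ?_
  have : {y : ℕ → Bool | y i = σ i} = (fun y : ℕ → Bool => y i) ⁻¹' {σ i} := rfl
  rw [this]
  exact (isOpen_discrete {σ i}).preimage (continuous_apply i)

lemma isClosed_cyl (s : Finset ℕ) (σ : ℕ → Bool) :
    IsClosed {y : ℕ → Bool | ∀ i ∈ s, y i = σ i} := by
  have : {y : ℕ → Bool | ∀ i ∈ s, y i = σ i} = ⋂ i ∈ s, {y : ℕ → Bool | y i = σ i} := by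
    ext y; simp
  rw [this]
  refine isClosed_biInter fun i _ => ?_
  have : {y : ℕ → Bool | y i = σ i} = (fun y : ℕ → Bool => y i) ⁻¹' {σ i} := rfl
  rw [this]
  exact (isClosed_discrete {σ i}).preimage (continuous_apply i)

lemma cyl_mem_nhds (s : Finset ℕ) (x : ℕ → Bool) :
    {y : ℕ → Bool | ∀ i ∈ s, y i = x i} ∈ nhds x :=
  (isOpen_cyl s x).mem_nhds (by simp)

/-- The neighborhood basis: any neighborhood of x contains a cylinder around x. -/
lemma exists_cyl_subset {x : ℕ → Bool} {U : Set (ℕ → Bool)} (hU : U ∈ nhds x) :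
    ∃ s : Finset ℕ, {y : ℕ → Bool | ∀ i ∈ s, y i = x i} ⊆ U := by
  rw [nhds_pi, Filter.mem_pi] at hU
  obtain ⟨I, hIfin, t, ht, hsub⟩ := hU
  refine ⟨hIfin.toFinset, fun y hy => hsub fun i hi => ?_⟩
  have := ht i
  rw [nhds_discrete] at this
  have hxi : x i ∈ t i := this
  have : y i = x i := hy i (hIfin.mem_toFinset.mpr hi)
  rwa [this]

/-- single-step extension: any condition can be extended to avoid a nowhere dense set. -/
lemma nwd_extend {K : Set (ℕ → Bool)} (hK : IsNowhereDense K) (s : Finset ℕ) (σ : ℕ → Bool) :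
    ∃ (t : Finset ℕ) (τ : ℕ → Bool), s ⊆ t ∧ (∀ i ∈ s, τ i = σ i) ∧
      ∀ y : ℕ → Bool, (∀ i ∈ t, y i = τ i) → y ∉ K := by
  have hop : IsOpen {y : ℕ → Bool | ∀ i ∈ s, y i = σ i} := isOpen_cyl s σ
  have hne : σ ∈ {y : ℕ → Bool | ∀ i ∈ s, y i = σ i} := fun i _ => rfl
  -- the open cylinder is not contained in closure K
  have : ¬ {y : ℕ → Bool | ∀ i ∈ s, y i = σ i} ⊆ closure K := by
    intro hsub
    have : {y : ℕ → Bool | ∀ i ∈ s, y i = σ i} ⊆ interior (closure K) :=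
      interior_maximal hsub hop
    rw [hK] at this
    exact this hne
  obtain ⟨x, hxcyl, hxK⟩ := Set.not_subset.mp this
  have : (closure K)ᶜ ∈ nhds x := (isClosed_closure.isOpen_compl).mem_nhds hxK
  obtain ⟨u, hu⟩ := exists_cyl_subset this
  refine ⟨s ∪ u, x, Finset.subset_union_left, fun i hi => (hxcyl i hi), fun y hy hyK => ?_⟩
  have : y ∈ (closure K)ᶜ := hu fun i hi => hy i (Finset.mem_union_right s hi)
  exact this (subset_closure hyK)

/-- iterated version: a condition on coordinates ≥ n forcing out of K regardless of values below n. -/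
lemma nwd_extend_all {K : Set (ℕ → Bool)} (hK : IsNowhereDense K) (n : ℕ) :
    ∃ (t : Finset ℕ) (τ : ℕ → Bool), (∀ i ∈ t, n ≤ i) ∧
      ∀ y : ℕ → Bool, (∀ i ∈ t, y i = τ i) → y ∉ K := by
  -- process a list of conditions on [0, n)
  have main : ∀ l : List (ℕ → Bool), ∃ (t : Finset ℕ) (τ : ℕ → Bool), (∀ i ∈ t, n ≤ i) ∧
      ∀ σ ∈ l, ∀ y : ℕ → Bool, (∀ i ∈ t, y i = τ i) → (∀ i < n, y i = σ i) → y ∉ K := by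
    intro l
    induction l with
    | nil => exact ⟨∅, fun _ => false, by simp, by simp⟩
    | cons σ l ih =>
      obtain ⟨t, τ, ht, hall⟩ := ih
      -- condition: σ on range n, τ on t
      set ρ : ℕ → Bool := fun i => if i < n then σ i else τ i with hρ
      obtain ⟨t', τ', hsub, hagree, havoid⟩ := nwd_extend hK (Finset.range n ∪ t) ρ
      refine ⟨t' \ Finset.range n, τ', fun i hi => ?_, fun σ' hσ' y hyt hyn => ?_⟩
      · simp only [Finset.mem_sdiff, Finset.mem_range, not_lt] at hi; exact hi.2
      rcases List.mem_cons.mp hσ' with h | h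
      · subst h
        refine havoid y (fun i hi => ?_)
        by_cases hin : i < n
        · rw [hyn i hin, hagree i (Finset.mem_union_left t (Finset.mem_range.mpr hin)), hρ]
          simp [hin]
        · exact hyt i (Finset.mem_sdiff.mpr ⟨hi, by simpa using hin⟩)
      · refine hall σ' h y (fun i hi => ?_) hyn
        have hit' : i ∈ t' := hsub (Finset.mem_union_right _ hi)
        have hin : ¬ i < n := not_lt.mpr (ht i hi)
        rw [hyt i (Finset.mem_sdiff.mpr ⟨hit', by simpa using hin⟩),
          hagree i (Finset.mem_union_right _ hi), hρ]
        simp [hin]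
  -- all possible conditions below n
  obtain ⟨t, τ, ht, hall⟩ := main (((Finset.range n).powerset.toList).map
    (fun A i => decide (i ∈ A)))
  refine ⟨t, τ, ht, fun y hy => ?_⟩
  refine hall (fun i => decide (i ∈ (Finset.range n).filter (fun j => y j = true)))
    (List.mem_map.mpr ⟨(Finset.range n).filter (fun j => y j = true),
      Finset.mem_toList.mpr (Finset.mem_powerset.mpr (Finset.filter_subset _ _)), rfl⟩)
    y hy (fun i hin => ?_)
  simp only [Finset.mem_filter, Finset.mem_range, decide_eq_true_eq]
  cases h : y i <;> simp [h, hin]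

/-- the coordinate-flip homeomorphism -/
def flipHomeo (τ : ℕ → Bool) : (ℕ → Bool) ≃ₜ (ℕ → Bool) where
  toFun y := fun i => xor (y i) (τ i)
  invFun y := fun i => xor (y i) (τ i)
  left_inv y := by funext i; simp
  right_inv y := by funext i; simp
  continuous_toFun := continuous_pi fun i =>
    (continuous_of_discreteTopology (f := fun b => xor b (τ i))).comp (continuous_apply i)
  continuous_invFun := continuous_pi fun i =>
    (continuous_of_discreteTopology (f := fun b => xor b (τ i))).comp (continuous_apply i)

lemma flip_chi (τ : ℕ → Bool) (X : Set ℕ) :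
    flipHomeo τ (chi X) = chi (symmDiff X {i | τ i = true}) := by
  funext i
  simp only [flipHomeo, Homeomorph.homeomorph_mk_coe, Equiv.coe_fn_mk]
  by_cases hX : i ∈ X <;> by_cases hτ : τ i = true
  · rw [chi_eq_true.mpr hX, hτ, chi_eq_false.mpr (by simp [Set.mem_symmDiff, hX, hτ])]; rfl
  · rw [chi_eq_true.mpr hX, Bool.eq_false_iff.mpr hτ,
      chi_eq_true.mpr (by simp [Set.mem_symmDiff, hX, hτ])]; rfl
  · rw [chi_eq_false.mpr hX, hτ, chi_eq_true.mpr (by simp [Set.mem_symmDiff, hX, hτ])]; rfl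
  · rw [chi_eq_false.mpr hX, Bool.eq_false_iff.mpr hτ,
      chi_eq_false.mpr (by simp [Set.mem_symmDiff, hX, hτ])]; rfl

/-- filters are closed under symmetric difference with finite sets -/
lemma filter_symmDiff {F : Set (Set ℕ)} (hF : IsFreeFilter F) {X : Set ℕ} (hX : X ∈ F)
    {T : Set ℕ} (hT : T.Finite) : symmDiff X T ∈ F := by
  have h1 : Tᶜ ∈ F := hF.2.2 Tᶜ (by rwa [compl_compl])
  have h2 : X ∩ Tᶜ ∈ F := hF.1.2.1 X hX Tᶜ h1
  refine hF.1.2.2 _ h2 _ ?_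
  intro i ⟨hiX, hiT⟩
  exact Set.mem_symmDiff.mpr (Or.inl ⟨hiX, hiT⟩)

lemma flip_image {F : Set (Set ℕ)} (hF : IsFreeFilter F) {τ : ℕ → Bool}
    (hτ : {i | τ i = true}.Finite) : flipHomeo τ '' (chi '' F) = chi '' F := by
  apply Set.Subset.antisymm
  · rintro _ ⟨_, ⟨X, hXF, rfl⟩, rfl⟩
    rw [flip_chi]
    exact ⟨_, filter_symmDiff hF hXF hτ, rfl⟩
  · rintro _ ⟨X, hXF, rfl⟩
    refine ⟨chi (symmDiff X {i | τ i = true}), ⟨_, filter_symmDiff hF hXF hτ, rfl⟩, ?_⟩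
    rw [flip_chi]
    congr 1
    rw [symmDiff_symmDiff_cancel_right]

/-- main step: if a free filter's image has the Baire property, it is meager. -/
lemma bp_to_meagre {F : Set (Set ℕ)} (hF : IsFreeFilter F)
    (h : BaireMeasurableSet (chi '' F)) : IsMeagre (chi '' F) := by
  classical
  obtain ⟨U, hUopen, hUeq⟩ := h.residualEq_isOpen
  rcases Set.eq_empty_or_nonempty U with rfl | ⟨x₀, hx₀⟩
  · -- F differs from ∅ by meager: F meager
    rw [IsMeagre]
    refine Filter.mem_of_superset hUeq ?_
    intro y hy
    simp only [Set.mem_setOf_eq] at hy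
    intro hyF
    have : (y ∈ chi '' F) = (y ∈ (∅ : Set (ℕ → Bool))) := hy
    rw [this] at hyF
    exact hyF
  · exfalso
    -- F is comeager
    obtain ⟨s, hs⟩ := exists_cyl_subset (hUopen.mem_nhds hx₀)
    set n : ℕ := s.sup id + 1 with hn
    have hsn : ∀ i ∈ s, i < n := fun i hi => by
      have := Finset.le_sup (f := id) hi; simp only [id_eq] at this; omega
    -- M = symmetric difference is meager
    set M : Set (ℕ → Bool) := {y | ¬ ((y ∈ chi '' F) = (y ∈ U))} with hM
    have hMmeagre : IsMeagre M := by
      rw [IsMeagre]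
      refine Filter.mem_of_superset hUeq ?_
      intro y hy hyM
      exact hyM hy
    have hcomeagre : IsMeagre (chi '' F)ᶜ := by
      have hsub : (chi '' F)ᶜ ⊆ ⋃ A ∈ (Finset.range n).powerset,
          (flipHomeo (fun i => decide (i ∈ A))) ⁻¹' M := by
        intro y hy
        set A : Finset ℕ := (Finset.range n).filter (fun i => y i ≠ x₀ i) with hA
        have hApow : A ∈ (Finset.range n).powerset :=
          Finset.mem_powerset.mpr (Finset.filter_subset _ _)
        refine Set.mem_biUnion hApow ?_
        set τ : ℕ → Bool := fun i => decide (i ∈ A) with hτ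
        have hτfin : {i | τ i = true}.Finite := by
          apply Set.Finite.subset (Finset.finite_toSet A)
          intro i hi
          simpa [hτ] using hi
        set z : ℕ → Bool := flipHomeo τ y with hz
        have hzU : z ∈ U := by
          apply hs
          intro i hi
          have hin : i < n := hsn i hi
          simp only [hz, flipHomeo, Homeomorph.homeomorph_mk_coe, Equiv.coe_fn_mk]
          by_cases hyi : y i = x₀ i
          · have : τ i = false := by
              simp [hτ, hA, hin, hyi]
            rw [this, Bool.xor_false, hyi]
          · have : τ i = true := by
              simp [hτ, hA, hin, hyi]
            rw [this, Bool.xor_true]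
            cases hb : y i <;> cases hb' : x₀ i <;> simp_all
        have hzF : z ∉ chi '' F := by
          intro hzF
          apply hy
          have : flipHomeo τ z ∈ flipHomeo τ '' (chi '' F) := Set.mem_image_of_mem _ hzF
          rw [flip_image hF hτfin] at this
          have hyz : flipHomeo τ z = y := by
            simp only [hz]
            exact (flipHomeo τ).symm_apply_apply y ▸ by
              funext i
              simp [flipHomeo]
          rwa [hyz] at this
        show z ∈ M
        simp only [hM, Set.mem_setOf_eq]
        intro heq
        rw [eq_iff_iff] at heq
        exact hzF (heq.mpr hzU)
      refine IsMeagre.mono hsub ?_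
      have : ∀ A ∈ (Finset.range n).powerset,
          IsMeagre ((flipHomeo (fun i => decide (i ∈ A))) ⁻¹' M) := fun A _ =>
        hMmeagre.preimage_of_isOpenMap (flipHomeo _).continuous (flipHomeo _).isOpenMap
      -- countable union of meager sets
      rw [IsMeagre, Set.compl_iUnion₂]
      exact (countable_bInter_mem (S := ((Finset.range n).powerset : Set (Finset ℕ)))
        (Finset.countable_toSet _)).mpr (fun A hA => this A hA)
    -- now the complement homeomorphism gives a contradiction
    have hres : chi '' F ∈ residual (ℕ → Bool) := by
      have := hcomeagre
      rwa [IsMeagre, compl_compl] at this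
    have hres2 : (flipHomeo (fun _ => true)) ⁻¹' (chi '' F) ∈ residual (ℕ → Bool) := by
      exact tendsto_residual_of_isOpenMap (flipHomeo _).continuous (flipHomeo _).isOpenMap hres
    have hinter : (chi '' F ∩ (flipHomeo (fun _ => true)) ⁻¹' (chi '' F)).Nonempty :=
      (dense_of_mem_residual (Filter.inter_mem hres hres2)).nonempty
    obtain ⟨y, ⟨X, hXF, rfl⟩, hy2⟩ := hinter
    rw [Set.mem_preimage, flip_chi] at hy2
    obtain ⟨X', hX'F, hX'⟩ := hy2
    have hXc : symmDiff X {i | (fun _ : ℕ => true) i = true} = Xᶜ := by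
      have : {i : ℕ | (fun _ : ℕ => true) i = true} = Set.univ := by
        ext i; simp
      rw [this]
      ext i
      simp [Set.mem_symmDiff]
    rw [hXc] at hX'
    have : X' = Xᶜ := chi_injective hX'
    subst this
    have : X ∩ Xᶜ ∈ F := hF.1.2.1 X hXF Xᶜ hX'F
    rw [Set.inter_compl_self] at this
    exact hF.2.1 this

lemma nwd_union {A B : Set (ℕ → Bool)} (hA : IsNowhereDense A) (hB : IsNowhereDense B) :
    IsNowhereDense (A ∪ B) := by
  rw [IsNowhereDense, closure_union, interior_eq_empty_iff_dense_compl, Set.compl_union]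
  have hdA : Dense (closure A)ᶜ := interior_eq_empty_iff_dense_compl.mp hA
  have hdB : Dense (closure B)ᶜ := interior_eq_empty_iff_dense_compl.mp hB
  exact hdA.inter_of_isOpen_left hdB isClosed_closure.isOpen_compl

lemma meagre_filter_intervals {F : Set (Set ℕ)} (hF : IsFreeFilter F)
    (h : IsMeagre (chi '' F)) :
    ∃ k : ℕ → ℕ, StrictMono k ∧
      ∀ X ∈ F, ∀ᶠ j in Filter.atTop, (X ∩ Set.Ico (k j) (k (j+1))).Nonempty := by
  classical
  obtain ⟨S, hSnwd, hScnt, hScov⟩ := isMeagre_iff_countable_union_isNowhereDense.mp h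
  -- turn S into a sequence of closed nwd increasing sets
  obtain ⟨f, hf⟩ : ∃ f : ℕ → Set (ℕ → Bool), ∀ s ∈ S, ∃ n, f n = s := by
    rcases S.eq_empty_or_nonempty with rfl | hne
    · exact ⟨fun _ => ∅, by simp⟩
    · obtain ⟨f, hf⟩ := (Set.Countable.exists_eq_range hScnt hne)
      exact ⟨f, fun s hs => by rw [hf] at hs; exact hs⟩
  set K : ℕ → Set (ℕ → Bool) := fun j => closure (⋃ i ∈ Finset.range (j+1),
      if f i ∈ S then f i else ∅) with hKdef
  have hnwd_piece : ∀ i : ℕ, IsNowhereDense (if f i ∈ S then f i else ∅) := by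
    intro i
    split
    · exact hSnwd _ ‹_›
    · exact isNowhereDense_empty
  have hKnwd : ∀ j, IsNowhereDense (K j) := by
    intro j
    apply IsNowhereDense.closure
    induction j with
    | zero =>
      have : ⋃ i ∈ Finset.range 1, (if f i ∈ S then f i else ∅) =
          (if f 0 ∈ S then f 0 else ∅) := by
        simp
      rw [this]
      exact hnwd_piece 0
    | succ j ih =>
      rw [Finset.range_add_one, Finset.set_biUnion_insert]
      exact nwd_union (hnwd_piece _) ih
  have hKmono : ∀ {m j : ℕ}, m ≤ j → K m ⊆ K j := by
    intro m j hmj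
    apply closure_mono
    intro x hx
    obtain ⟨i, hi, hxi⟩ := Set.mem_iUnion₂.mp hx
    refine Set.mem_biUnion (Finset.mem_range.mpr ?_) hxi
    have := Finset.mem_range.mp hi
    omega
  have hKcov : chi '' F ⊆ ⋃ j, K j := by
    intro x hx
    obtain ⟨s, hsS, hxs⟩ := hScov hx
    obtain ⟨n, rfl⟩ := hf s hsS
    refine Set.mem_iUnion.mpr ⟨n, subset_closure ?_⟩
    refine Set.mem_biUnion (Finset.mem_range.mpr (Nat.lt_succ_self n)) ?_
    simp [hsS, hxs]
  -- choose conditions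
  have step : ∀ (m j : ℕ), ∃ (t : Finset ℕ) (τ : ℕ → Bool), (∀ i ∈ t, m ≤ i) ∧
      ∀ y : ℕ → Bool, (∀ i ∈ t, y i = τ i) → y ∉ K j :=
    fun m j => nwd_extend_all (hKnwd j) m
  choose t τ hlow havoid using step
  -- recursive interval endpoints
  set k : ℕ → ℕ := fun j => Nat.rec 0 (fun j kj => max kj ((t kj j).sup id) + 1) j with hk
  have hkrec : ∀ j, k (j+1) = max (k j) ((t (k j) j).sup id) + 1 := fun j => rfl
  have hkmono : StrictMono k := strictMono_nat_of_lt_succ fun j => by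
    rw [hkrec]; omega
  have htsub : ∀ j, ∀ i ∈ t (k j) j, k j ≤ i ∧ i < k (j+1) := by
    intro j i hi
    refine ⟨hlow _ _ i hi, ?_⟩
    rw [hkrec]
    have : i ≤ (t (k j) j).sup id := Finset.le_sup (f := id) hi
    omega
  refine ⟨k, hkmono, fun X hX => ?_⟩
  by_contra hcon
  rw [Filter.not_eventually] at hcon
  -- J = set of bad intervals
  set J : Set ℕ := {j | ¬(X ∩ Set.Ico (k j) (k (j+1))).Nonempty} with hJ
  have hJlarge : ∀ n, ∃ j ∈ J, n ≤ j := by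
    intro n
    obtain ⟨j, hjn, hj⟩ := (Filter.frequently_atTop.mp hcon) n
    exact ⟨j, hj, hjn⟩
  -- the witness set
  set Y : Set ℕ := X ∪ ⋃ j ∈ J, {i | i ∈ t (k j) j ∧ τ (k j) j i = true} with hY
  have hYF : Y ∈ F := hF.1.2.2 X hX Y Set.subset_union_left
  have : chi Y ∈ ⋃ j, K j := hKcov ⟨Y, hYF, rfl⟩
  obtain ⟨n, hn⟩ := Set.mem_iUnion.mp this
  obtain ⟨j, hjJ, hjn⟩ := hJlarge n
  have hKj : chi Y ∈ K j := hKmono hjn hn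
  refine havoid (k j) j (chi Y) ?_ hKj
  intro i hi
  obtain ⟨hi1, hi2⟩ := htsub j i hi
  cases hτ : τ (k j) j i with
  | true =>
    refine chi_eq_true.mpr (Set.mem_union_right _ ?_)
    exact Set.mem_biUnion hjJ ⟨hi, hτ⟩
  | false =>
    refine chi_eq_false.mpr ?_
    rintro (hiX | hiU)
    · exact hjJ ⟨i, hiX, hi1, hi2⟩
    · obtain ⟨j', hj'⟩ := Set.mem_iUnion.mp hiU
      simp only [Set.mem_iUnion, Set.mem_setOf_eq, exists_prop] at hj'
      obtain ⟨hj'J, hit', hτ'⟩ := hj'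
      -- i ∈ t (k j') j' so i ∈ [k j', k (j'+1)); intervals disjoint
      obtain ⟨hl', hu'⟩ := htsub j' i hit'
      rcases lt_trichotomy j j' with hlt | rfl | hgt
      · have : k (j+1) ≤ k j' := hkmono.monotone hlt
        omega
      · rw [hτ] at hτ'; exact Bool.false_ne_true hτ'
      · have : k (j'+1) ≤ k j := hkmono.monotone hgt
        omega

/-- From interval hitting to eventual domination. -/
lemma intervals_to_bound {F : Set (Set ℕ)} (hF : IsFreeFilter F) {k : ℕ → ℕ}
    (hk : StrictMono k)
    (hit : ∀ X ∈ F, ∀ᶠ j in Filter.atTop, (X ∩ Set.Ico (k j) (k (j+1))).Nonempty) :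
    ∃ g : ℕ → ℕ, ∀ X ∈ F, ∀ᶠ n in Filter.atTop, enum X n ≤ g n := by
  classical
  refine ⟨fun n => k (2*n+2), fun X hX => ?_⟩
  obtain ⟨N, hN⟩ := Filter.eventually_atTop.mp (hit X hX)
  rw [Filter.eventually_atTop]
  refine ⟨N, fun n hn => ?_⟩
  -- choose a witness in each interval j ∈ [N, N+n]
  have hwit : ∀ j ∈ Finset.Icc N (N+n), ∃ x, x ∈ X ∧ k j ≤ x ∧ x < k (j+1) := by
    intro j hj
    obtain ⟨x, hx1, hx2⟩ := hN j (Finset.mem_Icc.mp hj).1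
    exact ⟨x, hx1, hx2.1, hx2.2⟩
  choose w hw using hwit
  -- the map j ↦ w j is injective into X ∩ [0, k (2n+2))
  have hcount : n < Nat.count (· ∈ X) (k (2*n+2)) := by
    rw [Nat.count_eq_card_filter_range]
    have hinj : Set.InjOn (fun j => if h : j ∈ Finset.Icc N (N+n) then w j h else 0)
        (Finset.Icc N (N+n)) := by
      intro a ha' b hb' hab
      have ha : a ∈ Finset.Icc N (N+n) := Finset.mem_coe.mp ha'
      have hb : b ∈ Finset.Icc N (N+n) := Finset.mem_coe.mp hb'
      simp only [dif_pos ha, dif_pos hb] at hab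
      by_contra hne
      rcases Nat.lt_or_ge a b with h | h
      · have h1 : w a ha < k (a+1) := (hw a ha).2.2
        have h2 : k b ≤ w b hb := (hw b hb).2.1
        have : k (a+1) ≤ k b := hk.monotone h
        omega
      · have h' : b < a := by omega
        have h1 : w b hb < k (b+1) := (hw b hb).2.2
        have h2 : k a ≤ w a ha := (hw a ha).2.1
        have : k (b+1) ≤ k a := hk.monotone h'
        omega
    have hmaps : ∀ j ∈ Finset.Icc N (N+n),
        (if h : j ∈ Finset.Icc N (N+n) then w j h else 0) ∈
          (Finset.range (k (2*n+2))).filter (· ∈ X) := by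
      intro j hj
      rw [dif_pos hj]
      refine Finset.mem_filter.mpr ⟨Finset.mem_range.mpr ?_, (hw j hj).1⟩
      have h1 : w j hj < k (j+1) := (hw j hj).2.2
      have h2 : k (j+1) ≤ k (2*n+2) := by
        apply hk.monotone
        have := (Finset.mem_Icc.mp hj).2
        omega
      omega
    have := Finset.card_le_card_of_injOn _ hmaps hinj
    rw [Nat.card_Icc] at this
    omega
  have := Nat.nth_lt_of_lt_count hcount
  exact le_of_lt this

/-- direction ⇐ : bounded implies meager. -/
lemma bound_to_meagre {F : Set (Set ℕ)} (hF : IsFreeFilter F) {g : ℕ → ℕ}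
    (hg : ∀ X ∈ F, ∀ᶠ n in Filter.atTop, enum X n ≤ g n) :
    IsMeagre (chi '' F) := by
  classical
  set k : ℕ → ℕ := fun j => Nat.rec 0 (fun _ kj => max (g kj) kj + 1) j with hkdef
  have hkrec : ∀ j, k (j+1) = max (g (k j)) (k j) + 1 := fun j => rfl
  have hkmono : StrictMono k := strictMono_nat_of_lt_succ fun j => by rw [hkrec]; omega
  set C : ℕ → Set (ℕ → Bool) :=
    fun N => {y | ∀ j, N ≤ j → ∃ i, k j ≤ i ∧ i < k (j+1) ∧ y i = true} with hC
  have hCclosed : ∀ N, IsClosed (C N) := by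
    intro N
    have : C N = ⋂ j ∈ {j : ℕ | N ≤ j},
        ⋃ i ∈ Finset.Ico (k j) (k (j+1)), {y : ℕ → Bool | y i = true} := by
      ext y
      simp only [Set.mem_iInter, Set.mem_setOf_eq, Set.mem_iUnion, Finset.mem_Ico, exists_prop]
      constructor
      · intro hy j hj
        obtain ⟨i, h1, h2, h3⟩ := hy j hj
        exact ⟨i, ⟨h1, h2⟩, h3⟩
      · intro hy j hj
        obtain ⟨i, ⟨h1, h2⟩, h3⟩ := hy j hj
        exact ⟨i, h1, h2, h3⟩
    rw [this]
    refine isClosed_biInter fun j _ => ?_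
    refine Set.Finite.isClosed_biUnion (Finset.finite_toSet _) fun i _ => ?_
    have : {y : ℕ → Bool | y i = true} = (fun y : ℕ → Bool => y i) ⁻¹' {true} := rfl
    rw [this]
    exact (isClosed_discrete {true}).preimage (continuous_apply i)
  have hCnwd : ∀ N, IsNowhereDense (C N) := by
    intro N
    rw [(hCclosed N).isNowhereDense_iff]
    rw [Set.eq_empty_iff_forall_notMem]
    intro x hx
    obtain ⟨s, hs⟩ := exists_cyl_subset ((isOpen_interior).mem_nhds hx)
    have hsub : {y : ℕ → Bool | ∀ i ∈ s, y i = x i} ⊆ C N := hs.trans interior_subset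
    -- pick a large interval beyond s
    set j : ℕ := max N (s.sup id + 1) with hj
    have hjN : N ≤ j := le_max_left _ _
    have hjs : ∀ i ∈ s, i < k j := by
      intro i hi
      have h1 : i ≤ s.sup id := Finset.le_sup (f := id) hi
      have h2 : s.sup id + 1 ≤ j := le_max_right _ _
      have h3 : j ≤ k j := hkmono.le_apply
      omega
    set y : ℕ → Bool := fun i => if k j ≤ i ∧ i < k (j+1) then false else x i with hy
    have hycyl : y ∈ {y : ℕ → Bool | ∀ i ∈ s, y i = x i} := by
      intro i hi
      have := hjs i hi
      simp only [hy]
      rw [if_neg (by omega)]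
    obtain ⟨i, h1, h2, h3⟩ := hsub hycyl j hjN
    simp only [hy] at h3
    rw [if_pos ⟨h1, h2⟩] at h3
    exact Bool.false_ne_true h3
  -- membership
  have hcov : chi '' F ⊆ ⋃ N, C N := by
    rintro _ ⟨X, hXF, rfl⟩
    have hXinf : X.Infinite := by
      by_contra hfin
      rw [Set.not_infinite] at hfin
      have : Xᶜ ∈ F := hF.2.2 Xᶜ (by rwa [compl_compl])
      have : X ∩ Xᶜ ∈ F := hF.1.2.1 X hXF Xᶜ this
      rw [Set.inter_compl_self] at this
      exact hF.2.1 this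
    obtain ⟨N, hN⟩ := Filter.eventually_atTop.mp (hg X hXF)
    refine Set.mem_iUnion.mpr ⟨N, fun j hj => ?_⟩
    have hkj : N ≤ k j := le_trans hj hkmono.le_apply
    have h1 : enum X (k j) ≤ g (k j) := hN (k j) hkj
    have h2 : k j ≤ enum X (k j) := Nat.le_nth (fun hf => absurd hf hXinf)
    have h3 : enum X (k j) ∈ X := Nat.nth_mem_of_infinite hXinf (k j)
    refine ⟨enum X (k j), h2, ?_, chi_eq_true.mpr h3⟩
    rw [hkrec]
    omega
  refine IsMeagre.mono hcov (isMeagre_iUnion fun N => ?_)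
  rw [isMeagre_iff_countable_union_isNowhereDense]
  exact ⟨{C N}, by simpa using hCnwd N, Set.countable_singleton _,
    by rw [Set.sUnion_singleton]⟩


/-- (Judah) A free filter `F` on `ℕ` (identified with a subset of Cantor space) has the
Baire property if and only if the family `F* = {f_X : X ∈ F}` of increasing enumerations
of members of `F` is bounded under eventual domination. -/
theorem filter_baire_property_iff_bounded
    (F : Set (Set ℕ)) (hF : IsFreeFilter F) :
    BaireMeasurableSet (chi '' F) ↔
      ∃ g : ℕ → ℕ, ∀ X ∈ F, ∀ᶠ n in Filter.atTop, enum X n ≤ g n := by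
  constructor
  · intro h
    obtain ⟨k, hk, hhit⟩ := meagre_filter_intervals hF (bp_to_meagre hF h)
    exact intervals_to_bound hF hk hhit
  · rintro ⟨g, hg⟩
    exact (bound_to_meagre hF hg).baireMeasurableSet
end

section
/- Let F be a free filter on ℕ generated by a family {X_i : i ∈ I} of subsets of ℕ together with the cofinite sets, and suppose that every family 𝒢 of functions ℕ → ℕ with |𝒢| ≤ |I| is bounded under eventual domination (there is g : ℕ → ℕ with f(n) ≤ g(n) for all but finitely many n, for every f ∈ 𝒢). Then F, identified with a subset of Cantor space 2^ω, is meager. -/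
open MeasureTheory

/-!
Choose for every finite set `s` of indices a function `f_s` sending `n` to an element of
`⋂ i ∈ s, X i` above `n`. There are at most `|I|` of these (or finitely many), so one `g`
eventually dominates them all. Cutting `ℕ` into consecutive blocks `[N k, N (k+1))` with
`g (N k) < N (k+1)`, every member of `F` meets all but finitely many blocks, and for each `K`
the points of Cantor space meeting every block from the `K`-th on form a closed set with empty
interior.
-/

open Filter Topology

lemma isClosed_setOf_forall_ge_exists_mem_Ico (N : ℕ → ℕ) (K : ℕ) :
    IsClosed {x : ℕ → Bool | ∀ k ≥ K, ∃ m ∈ Set.Ico (N k) (N (k + 1)), x m = true} := by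
  have h : {x : ℕ → Bool | ∀ k ≥ K, ∃ m ∈ Set.Ico (N k) (N (k + 1)), x m = true} =
      ⋂ k ≥ K, ⋃ m ∈ Set.Ico (N k) (N (k + 1)), {x | x m = true} := by
    ext x
    simp
  rw [h]
  exact isClosed_biInter fun k _ => (Set.finite_Ico _ _).isClosed_biUnion fun m _ =>
    isClosed_eq (continuous_apply m) continuous_const

section CantorBlocks

variable {N : ℕ → ℕ}

lemma isNowhereDense_setOf_forall_ge_exists_mem_Ico (hN : StrictMono N) (K : ℕ) :
    IsNowhereDense {x : ℕ → Bool | ∀ k ≥ K, ∃ m ∈ Set.Ico (N k) (N (k + 1)), x m = true} := by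
  rw [(isClosed_setOf_forall_ge_exists_mem_Ico N K).isNowhereDense_iff,
    Set.eq_empty_iff_forall_notMem]
  intro x hx
  -- Erasing `x` on the `j`-th block gives points outside the set that converge to `x`.
  let y : ℕ → ℕ → Bool := fun j m => if m ∈ Set.Ico (N j) (N (j + 1)) then false else x m
  have hy : Tendsto y atTop (𝓝 x) := by
    refine tendsto_pi_nhds.2 fun i => tendsto_const_nhds.congr' ?_
    filter_upwards [hN.tendsto_atTop.eventually_gt_atTop i] with j hj
    simp [y, Set.mem_Ico, hj.not_ge]
  obtain ⟨j, hjK, hjC⟩ :=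
    ((eventually_ge_atTop K).and (hy.eventually_mem (isOpen_interior.mem_nhds hx))).exists
  obtain ⟨m, hm, hym⟩ := interior_subset hjC j hjK
  simp only [y, if_pos hm, Bool.false_eq_true] at hym

lemma isMeagre_setOf_eventually_exists_mem_Ico (hN : StrictMono N) :
    IsMeagre {x : ℕ → Bool | ∀ᶠ k in atTop, ∃ m ∈ Set.Ico (N k) (N (k + 1)), x m = true} := by
  have h : {x : ℕ → Bool | ∀ᶠ k in atTop, ∃ m ∈ Set.Ico (N k) (N (k + 1)), x m = true} =
      ⋃ K, {x | ∀ k ≥ K, ∃ m ∈ Set.Ico (N k) (N (k + 1)), x m = true} := by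
    ext x
    simp only [eventually_atTop, Set.mem_ofPred_eq, Set.mem_iUnion]
  rw [h]
  exact isMeagre_iUnion fun K => (isNowhereDense_setOf_forall_ge_exists_mem_Ico hN K).isMeagre

lemma exists_strictMono_forall_lt_succ (g : ℕ → ℕ) :
    ∃ N : ℕ → ℕ, StrictMono N ∧ ∀ k, g (N k) < N (k + 1) := by
  let N : ℕ → ℕ := fun k => Nat.rec 0 (fun _ p => max (g p) p + 1) k
  have hN : ∀ k, N (k + 1) = max (g (N k)) (N k) + 1 := fun _ => rfl
  refine ⟨N, strictMono_nat_of_lt_succ fun k => ?_, fun k => ?_⟩ <;> rw [hN] <;> omega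

lemma eventually_exists_mem_Ico_inter {A Z : Set ℕ} (hZ : Zᶜ.Finite) {f g : ℕ → ℕ}
    (hfA : ∀ n, f n ∈ A) (hlt : ∀ n, n < f n) (hfg : ∀ᶠ n in atTop, f n ≤ g n)
    (hN : StrictMono N) (hgN : ∀ k, g (N k) < N (k + 1)) :
    ∀ᶠ k in atTop, ∃ m ∈ Set.Ico (N k) (N (k + 1)), m ∈ A ∩ Z := by
  have hfN : Tendsto (f ∘ N) atTop atTop :=
    tendsto_atTop_mono (fun k => (hlt (N k)).le) hN.tendsto_atTop
  have hZ' : Z ∈ (atTop : Filter ℕ) := Nat.cofinite_eq_atTop ▸ mem_cofinite.2 hZ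
  filter_upwards [hN.tendsto_atTop.eventually hfg, hfN.eventually hZ'] with k hfgk hZk
  exact ⟨f (N k), ⟨(hlt _).le, hfgk.trans_lt (hgN k)⟩, hfA _, hZk⟩

end CantorBlocks

lemma exists_forall_le_of_finite {ι : Type*} [Finite ι] (f : ι → ℕ → ℕ) :
    ∃ g : ℕ → ℕ, ∀ i, f i ≤ g :=
  ⟨fun n => ⨆ i, f i n,
    fun i n => le_ciSup (f := fun i => f i n) (Set.finite_range _).bddAbove i⟩

lemma exists_eventually_le_of_finset_family {I : Type}
    (hbound : ∀ G : Set (ℕ → ℕ), Cardinal.mk G ≤ Cardinal.mk I →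
      ∃ g : ℕ → ℕ, ∀ f ∈ G, ∀ᶠ n in atTop, f n ≤ g n)
    (f : Finset I → ℕ → ℕ) : ∃ g : ℕ → ℕ, ∀ s, ∀ᶠ n in atTop, f s n ≤ g n := by
  cases finite_or_infinite I with
  | inl _ =>
    obtain ⟨g, hg⟩ := exists_forall_le_of_finite f
    exact ⟨g, fun s => Eventually.of_forall (hg s)⟩
  | inr _ =>
    obtain ⟨g, hg⟩ := hbound (Set.range f)
      (Cardinal.mk_range_le.trans_eq (Cardinal.mk_finset_of_infinite I))
    exact ⟨g, fun s => hg _ ⟨s, rfl⟩⟩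

lemma IsFreeFilter.infinite_of_mem {F : Set (Set ℕ)} (hF : IsFreeFilter F) {A : Set ℕ}
    (hA : A ∈ F) : A.Infinite := by
  intro hfin
  have hAc : Aᶜ ∈ F := hF.2.2 Aᶜ (by rwa [compl_compl])
  have h := hF.1.2.1 A hA Aᶜ hAc
  rw [Set.inter_compl_self] at h
  exact hF.2.1 h

/-- If a free filter `F` is generated by a family `{X_i : i ∈ I}` together with the
cofinite sets, and every family of functions `ℕ → ℕ` of cardinality `≤ |I|` is bounded
under eventual domination, then `F` (as a subset of Cantor space) is meager. -/
theorem small_generated_filter_is_meager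
    (I : Type) (X : I → Set ℕ)
    (F : Set (Set ℕ)) (hF : IsFreeFilter F)
    (hFgen : F = {Y : Set ℕ | ∃ s : Finset I, ∃ Z : Set ℕ, Zᶜ.Finite ∧
      (⋂ i ∈ s, X i) ∩ Z ⊆ Y})
    (hbound : ∀ G : Set (ℕ → ℕ), Cardinal.mk G ≤ Cardinal.mk I →
      ∃ g : ℕ → ℕ, ∀ f ∈ G, ∀ᶠ n in Filter.atTop, f n ≤ g n) :
    IsMeagre (chi '' F) := by
  have hgen_mem : ∀ s : Finset I, (⋂ i ∈ s, X i) ∈ F := fun s => by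
    rw [hFgen]
    exact ⟨s, Set.univ, by simp, Set.inter_subset_left⟩
  choose f hfX hlt using fun (s : Finset I) (n : ℕ) =>
    (hF.infinite_of_mem (hgen_mem s)).exists_gt n
  obtain ⟨g, hfg⟩ := exists_eventually_le_of_finset_family hbound f
  obtain ⟨N, hN, hgN⟩ := exists_strictMono_forall_lt_succ g
  refine (isMeagre_setOf_eventually_exists_mem_Ico hN).mono ?_
  rintro _ ⟨A, hA, rfl⟩
  rw [hFgen] at hA
  obtain ⟨s, Z, hZ, hsub⟩ := hA
  filter_upwards [eventually_exists_mem_Ico_inter hZ (hfX s) (hlt s) (hfg s) hN hgN]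
    with k ⟨m, hm, hmA⟩
  exact ⟨m, hm, by simp [chi, hsub hmA]⟩
end
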